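/- For every 3×3 matrix M = [[a,b,c],[d,e,f],[g,h,i]] of nonnegative integers, nim(TER([[a,b,c],[d,e,f],[g,h,i]])) = nim(TER([[a,b,c],[d,pty(e),f],[g,h,i]])), where pty(e) = e mod 2. -/

import Mathlib

/-- The minimum excludant of a set of naturals. -/
noncomputable def mex (S : Set ℕ) : ℕ := sInf {n : ℕ | n ∉ S}

/-- A gamegraph: positions with an option function whose option relation is
well-founded (all plays are acyclic), together with a starting position. -/
structure GameGraph where
  Pos : Type
  opt : Pos → Set Pos
  wf : WellFounded fun q p => q ∈ opt p
  start : Pos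

/-- The nim-value of a position: the mex of the nim-values of its options;
terminal positions get nim-value `0`. -/
noncomputable def GameGraph.nim (G : GameGraph) : G.Pos → ℕ :=
  G.wf.fix fun p ih => mex {n : ℕ | ∃ q, ∃ h : q ∈ G.opt p, ih q h = n}

/-- The nim-value of a gamegraph is the nim-value of its starting position. -/
noncomputable def GameGraph.nimValue (G : GameGraph) : ℕ := G.nim G.start

/-- 3×3 matrices of nonnegative integers. -/
abbrev Mat3 := Fin 3 → Fin 3 → ℕ

/-- All four edge sums (top row, bottom row, left column, right column) are positive. -/
def edgeOK (M : Mat3) : Prop :=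
  0 < M 0 0 + M 0 1 + M 0 2 ∧ 0 < M 2 0 + M 2 1 + M 2 2 ∧
  0 < M 0 0 + M 1 0 + M 2 0 ∧ 0 < M 0 2 + M 1 2 + M 2 2

/-- Decrease entry `(i, j)` by one. -/
def decEntry (M : Mat3) (i j : Fin 3) : Mat3 :=
  fun a b => if a = i ∧ b = j then M a b - 1 else M a b

/-- Matrices obtained from `M` by decreasing one positive entry by `1`. -/
def matMoves (M : Mat3) : Set Mat3 :=
  {N | ∃ i j, 0 < M i j ∧ N = decEntry M i j}

/-- Options in the avoidance matrix game `DNT(M)`: decrease a positive entry by one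
so that all four edge sums remain positive. -/
def DNTmatOpt (M : Mat3) : Set Mat3 := {N | N ∈ matMoves M ∧ edgeOK N}

/-- Options in the achievement matrix game `TER(M)`: a matrix with a zero edge sum is
terminal; otherwise any positive entry may be decreased by one. -/
def TERmatOpt (M : Mat3) : Set Mat3 := {N | edgeOK M ∧ N ∈ matMoves M}

def mtot (M : Mat3) : ℕ := ∑ p : Fin 3 × Fin 3, M p.1 p.2

theorem mtot_lt {M N : Mat3} (h : N ∈ matMoves M) : mtot N < mtot M := by
  obtain ⟨i, j, hpos, rfl⟩ := h
  unfold mtot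
  apply Finset.sum_lt_sum
  · intro p _
    simp only [decEntry]
    split <;> omega
  · refine ⟨(i, j), Finset.mem_univ _, ?_⟩
    have hlt : M i j - 1 < M i j := by omega
    simpa [decEntry] using hlt

theorem matWF {opt : Mat3 → Set Mat3} (h : ∀ M N, N ∈ opt M → N ∈ matMoves M) :
    WellFounded fun N M => N ∈ opt M :=
  Subrelation.wf (fun {N M} hNM => mtot_lt (h M N hNM)) (InvImage.wf mtot Nat.lt_wfRel.wf)

/-- The gamegraph of the matrix game `DNT(M)` with starting position `M`. -/
def DNTmat (M : Mat3) : GameGraph :=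
  ⟨Mat3, DNTmatOpt, matWF (fun _ _ h => h.1), M⟩

/-- The gamegraph of the matrix game `TER(M)` with starting position `M`. -/
def TERmat (M : Mat3) : GameGraph :=
  ⟨Mat3, TERmatOpt, matWF (fun _ _ h => h.2), M⟩

/-- The nim-value of the matrix game `DNT(M)`. -/
noncomputable def nimDNTmat (M : Mat3) : ℕ := (DNTmat M).nimValue

/-- The nim-value of the matrix game `TER(M)`. -/
noncomputable def nimTERmat (M : Mat3) : ℕ := (TERmat M).nimValue

section Aux

lemma mex_empty' : mex (∅ : Set ℕ) = 0 := by
  simp [mex, Nat.sInf_eq_zero]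

lemma mex_not_mem {S : Set ℕ} (h : S.Finite) : mex S ∉ S := by
  have hne : {n : ℕ | n ∉ S}.Nonempty := by
    have := h.infinite_compl
    exact this.nonempty
  have := Nat.sInf_mem hne
  exact this

lemma mex_insert {S : Set ℕ} {x : ℕ} (hx : x ≠ mex S) : mex (insert x S) = mex S := by
  by_cases hne : {n : ℕ | n ∉ S}.Nonempty
  · have hm : mex S ∈ {n : ℕ | n ∉ S} := Nat.sInf_mem hne
    have hm' : mex S ∈ {n : ℕ | n ∉ insert x S} := by
      simp only [Set.mem_setOf_eq, Set.mem_insert_iff] at hm ⊢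
      tauto
    have hne' : {n : ℕ | n ∉ insert x S}.Nonempty := ⟨_, hm'⟩
    apply le_antisymm
    · exact Nat.sInf_le hm'
    · have := Nat.sInf_mem hne'
      simp only [Set.mem_setOf_eq, Set.mem_insert_iff] at this
      exact Nat.sInf_le (by simp only [Set.mem_setOf_eq]; tauto)
  · have h1 : {n : ℕ | n ∉ S} = ∅ := Set.not_nonempty_iff_eq_empty.mp hne
    have h2 : {n : ℕ | n ∉ insert x S} = ∅ := by
      ext n; simp only [Set.mem_setOf_eq, Set.mem_insert_iff, Set.mem_empty_iff_false, iff_false,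
        not_not]
      right
      have : n ∈ {m : ℕ | m ∉ S} ∨ n ∈ S := by by_cases hn : n ∈ S <;> [right; left] <;> simpa
      rcases this with hn | hn
      · rw [h1] at hn; exact absurd hn (Set.notMem_empty n)
      · exact hn
    unfold mex
    rw [h1, h2]

lemma TERnim_congr (M M' : Mat3) : (TERmat M).nim = (TERmat M').nim := rfl

lemma nimTER_eq (M : Mat3) : nimTERmat M = mex (nimTERmat '' TERmatOpt M) := by
  have h : nimTERmat M = (TERmat M).nim M := rfl
  rw [h]
  unfold GameGraph.nim
  refine (WellFounded.fix_eq _ _ _).trans ?_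
  beta_reduce
  congr 1
  ext n
  constructor
  · rintro ⟨q, hq, rfl⟩
    exact ⟨q, hq, rfl⟩
  · rintro ⟨q, hq, rfl⟩
    exact ⟨q, hq, rfl⟩

lemma TERopt_fin (M : Mat3) : (nimTERmat '' TERmatOpt M).Finite := by
  apply Set.Finite.image
  apply Set.Finite.subset (Set.finite_range fun p : Fin 3 × Fin 3 => decEntry M p.1 p.2)
  rintro N ⟨-, i, j, -, rfl⟩
  exact ⟨(i, j), rfl⟩

lemma nim_ne_opt {M N : Mat3} (h : N ∈ TERmatOpt M) : nimTERmat N ≠ nimTERmat M := by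
  intro hc
  have h1 : nimTERmat N ∈ nimTERmat '' TERmatOpt M := ⟨N, h, rfl⟩
  rw [nimTER_eq M] at hc
  rw [hc] at h1
  exact mex_not_mem (TERopt_fin M) h1

lemma nim_terminal {M : Mat3} (h : ¬ edgeOK M) : nimTERmat M = 0 := by
  rw [nimTER_eq]
  have : TERmatOpt M = ∅ := by
    ext N; simp [TERmatOpt, h]
  rw [this]
  simp [mex_empty']

def upd (M : Mat3) (v : ℕ) : Mat3 := fun a b => if a = 1 ∧ b = 1 then v else M a b

lemma upd_mid (M : Mat3) (v : ℕ) : upd M v 1 1 = v := by simp [upd]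

lemma upd_ne (M : Mat3) (v : ℕ) {i j : Fin 3} (h : ¬(i = 1 ∧ j = 1)) : upd M v i j = M i j := by
  simp [upd, h]

lemma dec_mid (M : Mat3) (v : ℕ) : decEntry (upd M v) 1 1 = upd M (v - 1) := by
  funext a b
  by_cases h : a = 1 ∧ b = 1
  · obtain ⟨rfl, rfl⟩ := h
    simp [decEntry, upd]
  · simp [decEntry, upd, h]

lemma dec_ne (M : Mat3) (v : ℕ) {i j : Fin 3} (h : ¬(i = 1 ∧ j = 1)) :
    decEntry (upd M v) i j = upd (decEntry M i j) v := by
  funext a b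
  by_cases hab : a = 1 ∧ b = 1
  · obtain ⟨rfl, rfl⟩ := hab
    have : ¬((1 : Fin 3) = i ∧ (1 : Fin 3) = j) := by tauto
    simp [decEntry, upd, this]
  · by_cases hij : a = i ∧ b = j <;> simp [decEntry, upd, hab, hij, h]

lemma edgeOK_upd (M : Mat3) (v : ℕ) : edgeOK (upd M v) ↔ edgeOK M := by
  unfold edgeOK upd
  norm_num [Fin.ext_iff]

lemma mem_nimMoves {M : Mat3} {n : ℕ} :
    n ∈ nimTERmat '' matMoves M ↔ ∃ i j, 0 < M i j ∧ nimTERmat (decEntry M i j) = n := by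
  constructor
  · rintro ⟨N, ⟨i, j, hp, rfl⟩, rfl⟩; exact ⟨i, j, hp, rfl⟩
  · rintro ⟨i, j, hp, h⟩; exact ⟨_, ⟨i, j, hp, rfl⟩, h⟩

end Aux
lemma step (k : ℕ) : ∀ (M : Mat3) (e : ℕ), mtot M + e ≤ k →
    nimTERmat (upd M (e + 2)) = nimTERmat (upd M e) := by
  induction k using Nat.strong_induction_on with
  | _ k IH =>
  intro M e hk
  by_cases hE : edgeOK M
  · have hopt : ∀ v : ℕ, TERmatOpt (upd M v) = matMoves (upd M v) := by
      intro v
      ext N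
      simp [TERmatOpt, (edgeOK_upd M v).mpr hE]
    rw [nimTER_eq, nimTER_eq, hopt, hopt]
    have IHout : ∀ (i j : Fin 3) (e' : ℕ), 0 < M i j → e' ≤ e →
        nimTERmat (upd (decEntry M i j) (e' + 2)) = nimTERmat (upd (decEntry M i j) e') := by
      intro i j e' hp he'
      have hlt : mtot (decEntry M i j) < mtot M := mtot_lt ⟨i, j, hp, rfl⟩
      exact IH (mtot (decEntry M i j) + e') (by omega) _ _ le_rfl
    match e, hk with
    | e' + 1, hk =>
      have IHmid : nimTERmat (upd M (e' + 2)) = nimTERmat (upd M e') :=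
        IH (mtot M + e') (by omega) M e' le_rfl
      have h1 : e' + 1 + 2 - 1 = e' + 2 := by omega
      have h2 : e' + 1 - 1 = e' := by omega
      congr 1
      ext n
      rw [mem_nimMoves, mem_nimMoves]
      constructor
      · rintro ⟨i, j, hp, rfl⟩
        by_cases hij : i = 1 ∧ j = 1
        · obtain ⟨rfl, rfl⟩ := hij
          refine ⟨1, 1, by simp [upd_mid], ?_⟩
          rw [dec_mid, dec_mid, h1, h2]
          exact IHmid.symm
        · have hp' : 0 < M i j := by rwa [upd_ne M _ hij] at hp
          refine ⟨i, j, by rw [upd_ne M _ hij]; exact hp', ?_⟩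
          rw [dec_ne M _ hij, dec_ne M _ hij]
          exact (IHout i j (e' + 1) hp' le_rfl).symm
      · rintro ⟨i, j, hp, rfl⟩
        by_cases hij : i = 1 ∧ j = 1
        · obtain ⟨rfl, rfl⟩ := hij
          refine ⟨1, 1, by simp [upd_mid], ?_⟩
          rw [dec_mid, dec_mid, h1, h2]
          exact IHmid
        · have hp' : 0 < M i j := by rwa [upd_ne M _ hij] at hp
          refine ⟨i, j, by rw [upd_ne M _ hij]; exact hp', ?_⟩
          rw [dec_ne M _ hij, dec_ne M _ hij]
          exact IHout i j (e' + 1) hp' le_rfl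
    | 0, hk =>
      have h1 : (0 : ℕ) + 2 - 1 = 1 := by omega
      have hset : nimTERmat '' matMoves (upd M (0 + 2)) =
          insert (nimTERmat (upd M 1)) (nimTERmat '' matMoves (upd M 0)) := by
        ext n
        rw [mem_nimMoves, Set.mem_insert_iff, mem_nimMoves]
        constructor
        · rintro ⟨i, j, hp, rfl⟩
          by_cases hij : i = 1 ∧ j = 1
          · obtain ⟨rfl, rfl⟩ := hij
            left
            rw [dec_mid, h1]
          · right
            have hp' : 0 < M i j := by rwa [upd_ne M _ hij] at hp
            refine ⟨i, j, by rw [upd_ne M _ hij]; exact hp', ?_⟩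
            rw [dec_ne M _ hij, dec_ne M _ hij]
            exact (IHout i j 0 hp' le_rfl).symm
        · rintro (h | ⟨i, j, hp, rfl⟩)
          · refine ⟨1, 1, by simp [upd_mid], ?_⟩
            rw [dec_mid, h1, h]
          · by_cases hij : i = 1 ∧ j = 1
            case pos =>
              obtain ⟨rfl, rfl⟩ := hij
              rw [upd_mid] at hp
              omega
            have hp' : 0 < M i j := by rwa [upd_ne M _ hij] at hp
            refine ⟨i, j, by rw [upd_ne M _ hij]; exact hp', ?_⟩
            rw [dec_ne M _ hij, dec_ne M _ hij]
            exact IHout i j 0 hp' le_rfl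
      rw [hset]
      apply mex_insert
      have h0 : nimTERmat (upd M 0) = mex (nimTERmat '' matMoves (upd M 0)) := by
        rw [nimTER_eq, hopt]
      rw [← h0]
      exact Ne.symm (nim_ne_opt (M := upd M 1) (N := upd M 0)
        ⟨(edgeOK_upd M 1).mpr hE, 1, 1, by simp [upd_mid], by rw [dec_mid]⟩)
  · have h1 := nim_terminal (M := upd M (e + 2)) (by rwa [edgeOK_upd])
    have h2 := nim_terminal (M := upd M e) (by rwa [edgeOK_upd])
    rw [h1, h2]

lemma lit_upd (a b c d f g h i v : ℕ) :
    ![![a, b, c], ![d, v, f], ![g, h, i]] = upd ![![a, b, c], ![d, 0, f], ![g, h, i]] v := by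
  funext x y
  fin_cases x <;> fin_cases y <;> simp [upd]

/-- The middle entry can be replaced by its parity in `TER(M)`:
`nim(TER([[a,b,c],[d,e,f],[g,h,i]])) = nim(TER([[a,b,c],[d,pty e,f],[g,h,i]]))`. -/
theorem TER_middle (a b c d e f g h i : ℕ) :
    nimTERmat ![![a, b, c], ![d, e, f], ![g, h, i]] =
      nimTERmat ![![a, b, c], ![d, e % 2, f], ![g, h, i]] := by
  induction e using Nat.strong_induction_on with
  | _ e IH =>
  by_cases h2 : e < 2
  · interval_cases e <;> rfl
  · obtain ⟨e', rfl⟩ : ∃ e', e = e' + 2 := ⟨e - 2, by omega⟩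
    have hs : nimTERmat ![![a, b, c], ![d, e' + 2, f], ![g, h, i]] =
        nimTERmat ![![a, b, c], ![d, e', f], ![g, h, i]] := by
      rw [lit_upd a b c d f g h i (e' + 2), lit_upd a b c d f g h i e']
      exact step _ _ e' le_rfl
    have hmod : (e' + 2) % 2 = e' % 2 := by omega
    rw [hs, IH e' (by omega), hmod]
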